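/- arXiv:2007.02216 — 5 statements merged into one kernel-verified Lean document; each statement's English description precedes it below -/
import Mathlib

section
/- In the configuration model with degree sequence d and M = \sum_i d_i even: for any simple graph H on {1,...,n} with d_i^H \le d_i for all i, the probability that H is a subgraph of the resulting multigraph G* is at most \prod_{i=1}^n (d_i)_{d_i^H} \cdot \prod_{i=1}^{e(H)} 1/(M - 2i + 1). -/
/-!
Count matchings instead of computing probabilities. If a matching `f` contains `H`, choosing for
every edge `uv` of `H` one pair of points matched between bins `u` and `v` assigns to each vertex
`u` an injection from its `H`-neighbours into its bin; there are `∏ u, (d u)_{deg u}` such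
assignments. An assignment prescribes `f` on `2 e(H)` points, and the matchings of `M` points
extending a prescribed partial matching of `2e` points number `(M - 2e - 1)!!`, which is
`(M - 1)!! / ∏_{i < e} (M - 2i - 1)`.
-/

open Finset

/-- `(k - 1)!!` for even `k` and `0` for odd `k`. -/
def perfectMatchingCount : ℕ → ℕ
  | 0 => 1
  | 1 => 0
  | k + 2 => (k + 1) * perfectMatchingCount k

theorem perfectMatchingCount_sub_mul_prod {M e : ℕ} (he : 2 * e ≤ M) :
    perfectMatchingCount (M - 2 * e) * ∏ i ∈ range e, (M - (2 * i + 1)) =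
      perfectMatchingCount M := by
  induction e with
  | zero => simp
  | succ e ih =>
    have hstep : M - 2 * e = M - 2 * (e + 1) + 2 := by omega
    have hfactor : M - (2 * e + 1) = M - 2 * (e + 1) + 1 := by omega
    rw [prod_range_succ, ← ih (by omega), hstep, hfactor, perfectMatchingCount]
    ring

abbrev PerfectMatchingFun (α : Type*) : Type _ :=
  {f : α → α // (∀ x, f (f x) = x) ∧ ∀ x, f x ≠ x}

namespace PerfectMatchingFun

variable {α : Type*}

/-- A matching that agrees with `g` on `P` maps `Pᶜ` to itself, so it is determined by its
restriction to `Pᶜ`, which is an arbitrary matching of `Pᶜ`. -/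
noncomputable def extendEquiv (g : α → α) (hg : Function.Involutive g) (P : Set α)
    (hmaps : Set.MapsTo g P P) (hfix : ∀ x ∈ P, g x ≠ x) :
    {f : PerfectMatchingFun α // Set.EqOn f.1 g P} ≃ PerfectMatchingFun ↥Pᶜ := by
  classical
  have maps_compl (f : PerfectMatchingFun α) (hf : Set.EqOn f.1 g P) :
      Set.MapsTo f.1 Pᶜ Pᶜ := fun x hx hfx =>
    hx (f.2.1 x ▸ hf hfx ▸ hmaps hfx)
  exact
  { toFun := fun f => ⟨(maps_compl f.1 f.2).restrict, fun x => Subtype.ext (f.1.2.1 x),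
      fun x hx => f.1.2.2 x (congrArg Subtype.val hx)⟩
    invFun := fun h => ⟨⟨fun x => if hx : x ∈ P then g x else h.1 ⟨x, hx⟩, fun x => by
        by_cases hx : x ∈ P
        · simp [hx, hmaps hx, hg x]
        · simp [hx, show (h.1 ⟨x, hx⟩ : α) ∉ P from (h.1 ⟨x, hx⟩).2, h.2.1 ⟨x, hx⟩], fun x => by
        by_cases hx : x ∈ P
        · simpa [hx] using hfix x hx
        · simpa [hx, Subtype.ext_iff] using h.2.2 ⟨x, hx⟩⟩,
      fun x hx => dif_pos hx⟩
    left_inv := fun f => by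
      ext x
      by_cases hx : x ∈ P
      · simp [hx, f.2 hx]
      · simp [hx]
    right_inv := fun h => by
      ext x
      simp [show (x : α) ∉ P from x.2] }

theorem apply_eq_iff_eqOn_swap [DecidableEq α] {p q : α} (f : PerfectMatchingFun α) :
    f.1 p = q ↔ Set.EqOn f.1 (Equiv.swap p q) {p, q} := by
  refine ⟨fun hpq => ?_, fun h => by simpa using h (Set.mem_insert p {q})⟩
  rintro x (rfl | rfl)
  · simpa using hpq
  · simp [← hpq, f.2.1 p]

theorem card_eq_perfectMatchingCount (α : Type*) [Finite α] :
    Nat.card (PerfectMatchingFun α) = perfectMatchingCount (Nat.card α) := by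
  suffices ∀ k (β : Type _) [Finite β], Nat.card β = k →
      Nat.card (PerfectMatchingFun β) = perfectMatchingCount k from this _ α rfl
  intro k
  induction k using perfectMatchingCount.induct with
  | case1 =>
    intro β _ hβ
    have : IsEmpty β := Finite.card_eq_zero_iff.mp hβ
    have : Unique (PerfectMatchingFun β) :=
      { default := ⟨id, fun x => isEmptyElim x, fun x => isEmptyElim x⟩
        uniq := fun f => Subtype.ext (funext fun x => isEmptyElim x) }
    simp [perfectMatchingCount]
  | case2 =>
    intro β _ hβ
    obtain ⟨p, hp⟩ := Nat.card_eq_one_iff_exists.mp hβ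
    have : IsEmpty (PerfectMatchingFun β) := ⟨fun f => f.2.2 p (hp _)⟩
    simp [perfectMatchingCount]
  | case3 k ih =>
    intro β _ hβ
    classical
    have : Fintype β := Fintype.ofFinite β
    obtain ⟨p⟩ : Nonempty β := Nat.card_pos_iff.mp (by omega) |>.1
    have e : PerfectMatchingFun β ≃
        Σ q : {q // q ≠ p}, PerfectMatchingFun ↥({p, q.1} : Set β)ᶜ :=
      (Equiv.sigmaFiberEquiv fun f : PerfectMatchingFun β =>
          (⟨f.1 p, f.2.2 p⟩ : {q // q ≠ p})).symm.trans
        (Equiv.sigmaCongrRight fun q =>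
          (Equiv.subtypeEquivRight fun f => by
            rw [Subtype.ext_iff]; exact apply_eq_iff_eqOn_swap f).trans
          (extendEquiv _ (Equiv.swap_apply_self p q.1) _
            (by rintro x (rfl | rfl) <;> simp)
            (by rintro x (rfl | rfl) <;> simp [q.2, q.2.symm])))
    have hcompl (q : {q // q ≠ p}) : Nat.card ↥({p, q.1} : Set β)ᶜ = k := by
      rw [Nat.card_coe_set_eq, Set.ncard_compl, Set.ncard_pair q.2.symm, hβ]; rfl
    have hne : Nat.card {q // q ≠ p} = k + 1 := by
      rw [Nat.card_eq_fintype_card, Fintype.card_subtype_compl, Fintype.card_subtype_eq,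
        ← Nat.card_eq_fintype_card, hβ]; rfl
    rw [Nat.card_congr e, Nat.card_sigma, sum_congr rfl fun q _ => ih _ (hcompl q),
      sum_const, card_univ, ← Nat.card_eq_fintype_card, hne, smul_eq_mul]
    rfl

theorem card_eqOn_mul_prod [Finite α] (f₀ : PerfectMatchingFun α) {P : Set α}
    (hP : Set.MapsTo f₀.1 P P) {e : ℕ} (hcard : Nat.card P = 2 * e) :
    Nat.card {f : PerfectMatchingFun α // Set.EqOn f.1 f₀.1 P} *
        ∏ i ∈ range e, (Nat.card α - (2 * i + 1)) =
      perfectMatchingCount (Nat.card α) := by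
  rw [Nat.card_congr (extendEquiv f₀.1 f₀.2.1 P hP fun x _ => f₀.2.2 x),
    card_eq_perfectMatchingCount, Nat.card_coe_set_eq, Set.ncard_compl,
    ← Nat.card_coe_set_eq, hcard]
  exact perfectMatchingCount_sub_mul_prod
    (by simpa [hcard] using Nat.card_mono (Set.toFinite _) (Set.subset_univ P))

end PerfectMatchingFun

section Configuration

variable {α V : Type*} (π : α → V) (H : SimpleGraph V)

abbrev BinAssignment : Type _ := ∀ u : V, H.neighborSet u ↪ {x : α // π x = u}

namespace BinAssignment

variable {π H} (A : BinAssignment π H)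

def point (δ : H.Dart) : α := A δ.fst ⟨δ.snd, δ.adj⟩

def Realizes (f : α → α) : Prop := ∀ δ : H.Dart, f (A.point δ) = A.point δ.symm

theorem point_injective : Function.Injective A.point := by
  intro δ δ' h
  have hfst : δ.fst = δ'.fst := ((A δ.fst _).2.symm.trans (congrArg π h)).trans (A δ'.fst _).2
  obtain ⟨⟨u, v⟩, hδ⟩ := δ
  obtain ⟨⟨u', v'⟩, hδ'⟩ := δ'
  obtain rfl : u = u' := hfst
  have : (⟨v, hδ⟩ : H.neighborSet u) = ⟨v', hδ'⟩ := (A u).injective (Subtype.ext h)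
  simp_all [Subtype.ext_iff]

theorem card_range_point [Finite V] :
    Nat.card (Set.range A.point) = 2 * Nat.card H.edgeSet := by
  classical
  have := Fintype.ofFinite V
  rw [← Nat.card_congr (Equiv.ofInjective _ A.point_injective), Nat.card_eq_fintype_card,
    SimpleGraph.dart_card_eq_twice_card_edges, SimpleGraph.edgeFinset_card,
    Nat.card_eq_fintype_card]

theorem mapsTo_range_point {f : α → α} (hf : A.Realizes f) :
    Set.MapsTo f (Set.range A.point) (Set.range A.point) := by
  rintro _ ⟨δ, rfl⟩
  exact ⟨δ.symm, (hf δ).symm⟩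

theorem realizes_iff_eqOn {f₀ : α → α} (hf₀ : A.Realizes f₀) (f : α → α) :
    A.Realizes f ↔ Set.EqOn f f₀ (Set.range A.point) := by
  refine ⟨fun hf => ?_, fun h δ => (h ⟨δ, rfl⟩).trans (hf₀ δ)⟩
  rintro _ ⟨δ, rfl⟩
  rw [hf δ, hf₀ δ]

theorem card_realizes_mul_prod_le [Finite α] [Finite V] :
    Nat.card {f : PerfectMatchingFun α // A.Realizes f.1} *
        ∏ i ∈ range (Nat.card H.edgeSet), (Nat.card α - (2 * i + 1)) ≤
      perfectMatchingCount (Nat.card α) := by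
  rcases isEmpty_or_nonempty {f : PerfectMatchingFun α // A.Realizes f.1} with h | ⟨f₀, hf₀⟩
  · simp
  rw [← PerfectMatchingFun.card_eqOn_mul_prod f₀ (A.mapsTo_range_point hf₀) A.card_range_point,
    Nat.card_congr (Equiv.subtypeEquivRight (p := fun f : PerfectMatchingFun α => A.Realizes f.1)
      fun f => A.realizes_iff_eqOn hf₀ f.1)]

end BinAssignment

theorem card_binAssignment [Finite α] [Fintype V] :
    Nat.card (BinAssignment π H) =
      ∏ u, (Nat.card {x // π x = u}).descFactorial (Nat.card (H.neighborSet u)) := by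
  classical
  have := Fintype.ofFinite α
  rw [Nat.card_pi]
  refine prod_congr rfl fun u _ => ?_
  simp only [Nat.card_eq_fintype_card, Fintype.card_embedding_eq]

variable {π H}

/-- Orient each edge of `H` by one pair `x, f x` matched between its two bins. -/
theorem exists_dart_point {f : α → α} (hf : Function.Involutive f)
    (hH : ∀ u v, H.Adj u v → ∃ x, π x = u ∧ π (f x) = v) :
    ∃ p : H.Dart → α, ∀ δ, π (p δ) = δ.fst ∧ f (p δ) = p δ.symm := by
  classical
  have hedge : ∀ e : H.edgeSet, ∃ x, s(π x, π (f x)) = e.1 := by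
    rintro ⟨e, he⟩
    induction e using Sym2.ind with
    | h u v =>
      obtain ⟨x, rfl, rfl⟩ := hH u v he
      exact ⟨x, rfl⟩
  choose c hc using hedge
  let x (δ : H.Dart) : α := c ⟨δ.edge, δ.edge_mem⟩
  have hx_symm (δ : H.Dart) : x δ.symm = x δ := congrArg c (Subtype.ext δ.edge_symm)
  refine ⟨fun δ => if π (x δ) = δ.fst then x δ else f (x δ), fun δ => ?_⟩
  have : s(π (x δ), π (f (x δ))) = s(δ.fst, δ.snd) := hc _
  rcases Sym2.eq_iff.mp this with ⟨h₁, h₂⟩ | ⟨h₁, h₂⟩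
  · simp [hx_symm, h₁]
  · simp [hx_symm, h₁, h₂, hf (x δ)]

theorem exists_realizes {f : α → α} (hf : Function.Involutive f)
    (hH : ∀ u v, H.Adj u v → ∃ x, π x = u ∧ π (f x) = v) :
    ∃ A : BinAssignment π H, A.Realizes f := by
  obtain ⟨p, hp⟩ := exists_dart_point hf hH
  have hpsnd (δ : H.Dart) : π (f (p δ)) = δ.snd := by rw [(hp δ).2, (hp δ.symm).1]; rfl
  refine ⟨fun u => ⟨fun w => ⟨p ⟨(u, w), w.2⟩, (hp _).1⟩, fun w w' h => ?_⟩, fun δ => (hp δ).2⟩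
  exact Subtype.ext ((hpsnd _).symm.trans ((congrArg (π ∘ f ∘ Subtype.val) h).trans (hpsnd _)))

theorem card_contains_mul_prod_le [Finite α] [Fintype V] :
    Nat.card {f : PerfectMatchingFun α // ∀ u v, H.Adj u v → ∃ x, π x = u ∧ π (f.1 x) = v} *
        ∏ i ∈ range (Nat.card H.edgeSet), (Nat.card α - (2 * i + 1)) ≤
      (∏ u, (Nat.card {x // π x = u}).descFactorial (Nat.card (H.neighborSet u))) *
        perfectMatchingCount (Nat.card α) := by
  classical
  have := Fintype.ofFinite α
  set e := Nat.card H.edgeSet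
  have hinj : Nat.card {f : PerfectMatchingFun α //
        ∀ u v, H.Adj u v → ∃ x, π x = u ∧ π (f.1 x) = v} ≤
      Nat.card (Σ A : BinAssignment π H, {f : PerfectMatchingFun α // A.Realizes f.1}) :=
    Nat.card_le_card_of_injective
      (fun f => ⟨(exists_realizes f.1.2.1 f.2).choose, f.1,
        (exists_realizes f.1.2.1 f.2).choose_spec⟩)
      fun f g h => Subtype.ext (congrArg (fun s => s.2.1) h)
  calc _ ≤ Nat.card (Σ A : BinAssignment π H, {f : PerfectMatchingFun α // A.Realizes f.1}) *
        ∏ i ∈ range e, (Nat.card α - (2 * i + 1)) := Nat.mul_le_mul_right _ hinj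
    _ = ∑ A : BinAssignment π H, Nat.card {f : PerfectMatchingFun α // A.Realizes f.1} *
        ∏ i ∈ range e, (Nat.card α - (2 * i + 1)) := by rw [Nat.card_sigma, sum_mul]
    _ ≤ ∑ _A : BinAssignment π H, perfectMatchingCount (Nat.card α) :=
        sum_le_sum fun A _ => A.card_realizes_mul_prod_le
    _ = _ := by
        rw [sum_const, card_univ, ← Nat.card_eq_fintype_card, card_binAssignment,
          smul_eq_mul]

end Configuration

def permSubtypeEquivOfInvolutive {α : Type*} {C : (α → α) → Prop}
    (hC : ∀ f, C f → Function.Involutive f) :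
    {σ : Equiv.Perm α // C σ} ≃ {f : α → α // C f} where
  toFun σ := ⟨σ.1, σ.2⟩
  invFun f := ⟨(hC f.1 f.2).toPerm, f.2⟩
  left_inv _ := Subtype.ext (Equiv.ext fun _ => rfl)
  right_inv _ := rfl

theorem stmt4_general (n : ℕ) (d : Fin n → ℕ) (H : SimpleGraph (Fin n)) :
    Nat.card {f : Equiv.Perm ((i : Fin n) × Fin (d i)) //
        ((∀ x, f (f x) = x) ∧ ∀ x, f x ≠ x) ∧
        ∀ u v, H.Adj u v → ∃ p : (i : Fin n) × Fin (d i), p.1 = u ∧ (f p).1 = v} *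
      ∏ i ∈ Finset.range (Nat.card H.edgeSet), ((∑ j, d j) - (2 * i + 1)) ≤
    (∏ i, (d i).descFactorial (Nat.card (H.neighborSet i))) *
      Nat.card {f : Equiv.Perm ((i : Fin n) × Fin (d i)) //
        (∀ x, f (f x) = x) ∧ ∀ x, f x ≠ x} := by
  have hfiber (u : Fin n) : Nat.card {x : (i : Fin n) × Fin (d i) // x.1 = u} = d u := by
    rw [Nat.card_congr (Equiv.sigmaSubtype u), Nat.card_eq_fintype_card, Fintype.card_fin]
  have hpoints : Nat.card ((i : Fin n) × Fin (d i)) = ∑ i, d i := by simp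
  rw [Nat.card_congr ((permSubtypeEquivOfInvolutive (C := fun f => ((∀ x, f (f x) = x) ∧
        ∀ x, f x ≠ x) ∧ ∀ u v, H.Adj u v → ∃ p : (i : Fin n) × Fin (d i), p.1 = u ∧ (f p).1 = v)
        fun f hf => hf.1.1).trans (Equiv.subtypeSubtypeEquivSubtypeInter _ _).symm),
    Nat.card_congr (permSubtypeEquivOfInvolutive (C := fun f => (∀ x, f (f x) = x) ∧
      ∀ x, f x ≠ x) fun f hf => hf.1),
    PerfectMatchingFun.card_eq_perfectMatchingCount, ← hpoints]
  simpa only [hfiber] using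
    card_contains_mul_prod_le (π := fun x : (i : Fin n) × Fin (d i) => x.1) (H := H)

/-- Configuration model: vertex `i` is a bin `Fin (d i)` of points, and a uniformly random
perfect matching (fixed-point-free involution) is taken over all `M = ∑ d i` points; the
multigraph `G*` has an edge `uv` for each matched pair with one point in bin `u` and one in
bin `v`.  For a simple graph `H` with `deg_H i ≤ d i`, the probability that `H ⊆ G*` is at
most `∏ i (d i)_{deg_H i} ⬝ ∏_{i=1}^{e(H)} 1/(M - 2i + 1)`.  Stated multiplicatively. -/
theorem stmt4 (n : ℕ) (d : Fin n → ℕ) (hM : Even (∑ i, d i)) (H : SimpleGraph (Fin n))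
    (hle : ∀ i, Nat.card (H.neighborSet i) ≤ d i) :
    Nat.card {f : Equiv.Perm ((i : Fin n) × Fin (d i)) //
        ((∀ x, f (f x) = x) ∧ ∀ x, f x ≠ x) ∧
        ∀ u v, H.Adj u v → ∃ p : (i : Fin n) × Fin (d i), p.1 = u ∧ (f p).1 = v} *
      ∏ i ∈ Finset.range (Nat.card H.edgeSet), ((∑ j, d j) - (2 * i + 1)) ≤
    (∏ i, (d i).descFactorial (Nat.card (H.neighborSet i))) *
      Nat.card {f : Equiv.Perm ((i : Fin n) × Fin (d i)) //
        (∀ x, f (f x) = x) ∧ ∀ x, f x ≠ x} :=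
  stmt4_general n d H
end

section
/- Let S_1, S_2 be sets of vertices of a multigraph generated by the configuration model with degree sequence d, M = \sum d_i even. For any integer \ell \ge 1 with 2\ell \le M, the probability that there are at least \ell edges with one end in S_1 and the other in S_2 is at most \binom{d(S_1)}{\ell} (d(S_2))_{\ell} / \prod_{i=1}^{\ell}(M - 2i + 1), where d(S) = \sum_{i \in S} d_i. -/
open Finset Equiv

section Aux
variable {α : Type*} [Fintype α] [LinearOrder α]

private lemma step_lemma {ℓ k : ℕ} (hk : k < ℓ) (a b : Fin ℓ → α)
    (ha : Function.Injective a) (hb : Function.Injective b)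
    (hab : ∀ i j, a i ≠ b j) :
    Nat.card {f : Equiv.Perm α // ((∀ x, f (f x) = x) ∧ ∀ x, f x ≠ x) ∧
        ∀ i : Fin ℓ, (i : ℕ) < k + 1 → f (a i) = b i} * (Fintype.card α - (2 * k + 1)) ≤
    Nat.card {f : Equiv.Perm α // ((∀ x, f (f x) = x) ∧ ∀ x, f x ≠ x) ∧
        ∀ i : Fin ℓ, (i : ℕ) < k → f (a i) = b i} := by
  classical
  set K : Fin ℓ := ⟨k, hk⟩ with hK
  set used : Finset α := (Finset.Iio K).image a ∪ (Finset.Iio K).image b with husedDef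
  have hmemused : ∀ x, x ∈ used ↔ ∃ j : Fin ℓ, (j : ℕ) < k ∧ (x = a j ∨ x = b j) := by
    intro x
    simp only [husedDef, mem_union, mem_image, Finset.mem_Iio]
    constructor
    · rintro (⟨j, hj, rfl⟩ | ⟨j, hj, rfl⟩)
      · exact ⟨j, hj, Or.inl rfl⟩
      · exact ⟨j, hj, Or.inr rfl⟩
    · rintro ⟨j, hj, (rfl | rfl)⟩
      · exact Or.inl ⟨j, hj, rfl⟩
      · exact Or.inr ⟨j, hj, rfl⟩
  have haK : a K ∉ used := by
    rw [hmemused]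
    rintro ⟨j, hj, (hje | hje)⟩
    · have := ha hje
      subst this
      simp [hK] at hj
    · exact hab K j hje
  have hused : used.card = 2 * k := by
    rw [husedDef, card_union_of_disjoint, card_image_of_injective _ ha,
      card_image_of_injective _ hb, Fin.card_Iio]
    · show (K : ℕ) + (K : ℕ) = 2 * k
      simp [hK]; omega
    · simp only [disjoint_left, mem_image]
      rintro x ⟨i, _, rfl⟩ ⟨j, _, hje⟩
      exact hab i j hje.symm
  set V : Finset α := univ \ insert (a K) used with hVdef
  have hV : V.card = Fintype.card α - (2 * k + 1) := by
    rw [hVdef, card_sdiff_of_subset (subset_univ _), card_univ, card_insert_of_notMem haK, hused]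
  have hVmem : ∀ u ∈ V, u ≠ a K ∧ ∀ j : Fin ℓ, (j : ℕ) < k → u ≠ a j ∧ u ≠ b j := by
    intro u hu
    rw [hVdef, mem_sdiff, mem_insert] at hu
    obtain ⟨-, hu2⟩ := hu
    push_neg at hu2
    obtain ⟨h1, h2⟩ := hu2
    rw [hmemused] at h2
    exact ⟨h1, fun j hj => ⟨fun h => h2 ⟨j, hj, Or.inl h⟩, fun h => h2 ⟨j, hj, Or.inr h⟩⟩⟩
  -- the injection
  set F : {f : Equiv.Perm α // ((∀ x, f (f x) = x) ∧ ∀ x, f x ≠ x) ∧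
        ∀ i : Fin ℓ, (i : ℕ) < k + 1 → f (a i) = b i} × {u // u ∈ V} →
      {f : Equiv.Perm α // ((∀ x, f (f x) = x) ∧ ∀ x, f x ≠ x) ∧
        ∀ i : Fin ℓ, (i : ℕ) < k → f (a i) = b i} := fun p =>
    ⟨Equiv.swap (b K) p.2.1 * p.1.1 * Equiv.swap (b K) p.2.1, by
      obtain ⟨⟨f, ⟨hinv, hfpf⟩, hpairs⟩, u, hu⟩ := p
      obtain ⟨huaK, hujk⟩ := hVmem u hu
      simp only [Equiv.Perm.mul_apply]
      refine ⟨⟨fun x => ?_, fun x => ?_⟩, fun j hj => ?_⟩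
      · simp [Equiv.swap_apply_self, hinv]
      · intro h
        have h2 : f (Equiv.swap (b K) u x) = Equiv.swap (b K) u x := by
          have := congrArg (Equiv.swap (b K) u) h
          rwa [Equiv.swap_apply_self] at this
        exact hfpf _ h2
      · have h1 : Equiv.swap (b K) u (a j) = a j := by
          apply Equiv.swap_apply_of_ne_of_ne
          · exact hab j K
          · exact fun h => (hujk j hj).1 h.symm
        have h2 : Equiv.swap (b K) u (b j) = b j := by
          apply Equiv.swap_apply_of_ne_of_ne
          · intro h
            have := hb h
            subst this
            simp [hK] at hj
          · exact fun h => (hujk j hj).2 h.symm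
        rw [h1, hpairs j (Nat.lt_succ_of_lt hj), h2]⟩
  have hFinj : Function.Injective F := by
    rintro ⟨⟨f, ⟨hinv, hfpf⟩, hpairs⟩, u, hu⟩ ⟨⟨f', ⟨hinv', hfpf'⟩, hpairs'⟩, u', hu'⟩ h
    have heq : Equiv.swap (b K) u * f * Equiv.swap (b K) u
        = Equiv.swap (b K) u' * f' * Equiv.swap (b K) u' := congrArg Subtype.val h
    have haKu : ∀ (v : α), v ∈ V → Equiv.swap (b K) v (a K) = a K := fun v hv =>
      Equiv.swap_apply_of_ne_of_ne (hab K K) (fun h => (hVmem v hv).1 h.symm)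
    have hval : ∀ (g : Equiv.Perm α) (v : α), v ∈ V → (∀ i : Fin ℓ, (i : ℕ) < k + 1 → g (a i) = b i) →
        (Equiv.swap (b K) v * g * Equiv.swap (b K) v) (a K) = v := by
      intro g v hv hgp
      simp only [Equiv.Perm.mul_apply]
      rw [haKu v hv, hgp K (by simp [hK]), Equiv.swap_apply_left]
    have huu : u = u' := by
      have h1 := hval f u hu hpairs
      have h2 := hval f' u' hu' hpairs'
      rw [heq] at h1
      rw [h1] at h2
      exact h2
    subst huu
    have hff : f = f' := by
      have := mul_left_cancel (mul_right_cancel heq)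
      exact this
    subst hff
    rfl
  calc Nat.card {f : Equiv.Perm α // ((∀ x, f (f x) = x) ∧ ∀ x, f x ≠ x) ∧
        ∀ i : Fin ℓ, (i : ℕ) < k + 1 → f (a i) = b i} * (Fintype.card α - (2 * k + 1))
      = Nat.card ({f : Equiv.Perm α // ((∀ x, f (f x) = x) ∧ ∀ x, f x ≠ x) ∧
        ∀ i : Fin ℓ, (i : ℕ) < k + 1 → f (a i) = b i} × {u // u ∈ V}) := by
        rw [Nat.card_prod, Nat.card_eq_finsetCard, hV]
    _ ≤ _ := Nat.card_le_card_of_injective F hFinj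

end Aux
section Aux2
open Finset Equiv
variable {α : Type*} [Fintype α] [LinearOrder α]

private lemma chain_lemma {ℓ : ℕ} (a b : Fin ℓ → α)
    (ha : Function.Injective a) (hb : Function.Injective b)
    (hab : ∀ i j, a i ≠ b j) (k : ℕ) (hkl : k ≤ ℓ) :
    Nat.card {f : Equiv.Perm α // ((∀ x, f (f x) = x) ∧ ∀ x, f x ≠ x) ∧
        ∀ i : Fin ℓ, (i : ℕ) < k → f (a i) = b i} *
      ∏ i ∈ Finset.range k, (Fintype.card α - (2 * i + 1)) ≤
    Nat.card {f : Equiv.Perm α // (∀ x, f (f x) = x) ∧ ∀ x, f x ≠ x} := by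
  induction k with
  | zero =>
      simp only [range_zero, prod_empty, mul_one]
      exact Nat.card_le_card_of_injective (fun f => ⟨f.1, f.2.1⟩)
        (by rintro ⟨x, hx⟩ ⟨y, hy⟩ h
            simp only [Subtype.mk.injEq] at h
            exact Subtype.ext h)
  | succ k ih =>
      have h1 := step_lemma (Nat.lt_of_succ_le hkl) a b ha hb hab
      have h2 := ih (Nat.le_of_succ_le hkl)
      rw [prod_range_succ, ← mul_assoc, mul_right_comm]
      exact le_trans (Nat.mul_le_mul_right _ h1) h2

private lemma extract_lemma (A B : Finset α) (ℓ : ℕ) (f : Equiv.Perm α)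
    (h1 : ∀ x, f (f x) = x) (h2 : ∀ x, f x ≠ x)
    (hW : 2 * ℓ ≤ Nat.card {x : α // (x ∈ A ∧ f x ∈ B) ∨ (x ∈ B ∧ f x ∈ A)}) :
    ∃ s : Finset α, s ∈ A.powersetCard ℓ ∧ (∀ x ∈ s, f x ∈ B) ∧ (∀ x ∈ s, f x ∉ s) := by
  classical
  set W : Finset α := univ.filter (fun x => (x ∈ A ∧ f x ∈ B) ∨ (x ∈ B ∧ f x ∈ A)) with hWdef
  have hWcard : 2 * ℓ ≤ W.card := by
    have : Nat.card {x : α // (x ∈ A ∧ f x ∈ B) ∨ (x ∈ B ∧ f x ∈ A)} = Nat.card {x // x ∈ W} :=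
      Nat.card_congr (Equiv.subtypeEquivRight (fun x => by simp [hWdef]))
    rwa [this, Nat.card_eq_finsetCard] at hW
  set R : Finset α := univ.filter
      (fun x => (x ∈ A ∧ f x ∈ B) ∧ (¬(f x ∈ A ∧ x ∈ B) ∨ x < f x)) with hRdef
  have hRops : ∀ x ∈ R, f x ∉ R := by
    intro x hx hfx
    simp only [hRdef, mem_filter, mem_univ, true_and, h1] at hx hfx
    obtain ⟨⟨hxA, hfxB⟩, hc⟩ := hx
    obtain ⟨⟨hfxA, hxB⟩, hc'⟩ := hfx
    have hlt : x < f x := hc.resolve_left (fun h => h ⟨hfxA, hxB⟩)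
    have hlt' : f x < x := hc'.resolve_left (fun h => h ⟨hxA, hfxB⟩)
    exact absurd (lt_trans hlt hlt') (lt_irrefl x)
  have hcover : W ⊆ R ∪ R.image f := by
    intro x hx
    rw [mem_union]
    have hx' := (mem_filter.mp hx).2
    by_cases hxR : x ∈ R
    · exact Or.inl hxR
    · right
      rw [mem_image]
      refine ⟨f x, ?_, h1 x⟩
      simp only [hRdef, mem_filter, mem_univ, true_and, h1] at hxR ⊢
      rcases lt_trichotomy x (f x) with hlt | heq | hgt
      · -- x < f x ; then x ∉ R forces ¬(x∈A ∧ f x∈B)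
        have hnp : ¬(x ∈ A ∧ f x ∈ B) := fun hp => hxR ⟨hp, Or.inr hlt⟩
        have hq : x ∈ B ∧ f x ∈ A := hx'.resolve_left hnp
        exact ⟨⟨hq.2, hq.1⟩, Or.inl hnp⟩
      · exact absurd heq.symm (h2 x)
      · -- f x < x
        refine ⟨?_, Or.inr hgt⟩
        rcases hx' with hp | hq
        · have := hxR
          by_cases hq2 : f x ∈ A ∧ x ∈ B
          · exact hq2
          · exact absurd ⟨hp, Or.inl hq2⟩ hxR
        · exact ⟨hq.2, hq.1⟩
  have hR : ℓ ≤ R.card := by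
    have c1 := card_le_card hcover
    have c2 := card_union_le R (R.image f)
    have c3 := card_image_le (s := R) (f := f)
    omega
  obtain ⟨s, hsub, hcard⟩ := Finset.exists_subset_card_eq hR
  refine ⟨s, mem_powersetCard.mpr ⟨fun x hx => ((mem_filter.mp (hsub hx)).2.1).1, hcard⟩,
    fun x hx => ((mem_filter.mp (hsub hx)).2.1).2, fun x hx hfx => hRops x (hsub hx) (hsub hfx)⟩

end Aux2
section Aux3
open Finset Equiv
variable {α : Type*} [Fintype α] [LinearOrder α]

private def aFun (ℓ : ℕ) (A : Finset α) (s : {s : Finset α // s ∈ A.powersetCard ℓ})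
    (i : Fin ℓ) : α :=
  (s.1.orderIsoOfFin (Finset.mem_powersetCard.mp s.2).2 i : α)

private lemma aFun_mem (ℓ : ℕ) (A : Finset α) (s : {s : Finset α // s ∈ A.powersetCard ℓ})
    (i : Fin ℓ) : aFun ℓ A s i ∈ s.1 :=
  (s.1.orderIsoOfFin (Finset.mem_powersetCard.mp s.2).2 i).2

private lemma aFun_inj (ℓ : ℕ) (A : Finset α) (s : {s : Finset α // s ∈ A.powersetCard ℓ}) :
    Function.Injective (aFun ℓ A s) := fun i j h =>
  (s.1.orderIsoOfFin (Finset.mem_powersetCard.mp s.2).2).injective (Subtype.coe_injective h)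

private abbrev Dty (ℓ : ℕ) (A B : Finset α) : Type _ :=
  {d : {s : Finset α // s ∈ A.powersetCard ℓ} × (Fin ℓ ↪ {x : α // x ∈ B}) //
    ∀ j : Fin ℓ, ((d.2 j : α)) ∉ (d.1.1 : Finset α)}

private abbrev ExtT (ℓ : ℕ) (A B : Finset α) (d : Dty ℓ A B) : Type _ :=
  {f : Equiv.Perm α // ((∀ x, f (f x) = x) ∧ ∀ x, f x ≠ x) ∧
      ∀ i : Fin ℓ, (i : ℕ) < ℓ → f (aFun ℓ A d.1.1 i) = (d.1.2 i : α)}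

private lemma aux_lemma (A B : Finset α) (ℓ : ℕ) :
    Nat.card {f : Equiv.Perm α // ((∀ x, f (f x) = x) ∧ ∀ x, f x ≠ x) ∧
        2 * ℓ ≤ Nat.card {x : α // (x ∈ A ∧ f x ∈ B) ∨ (x ∈ B ∧ f x ∈ A)}} *
      ∏ i ∈ Finset.range ℓ, (Fintype.card α - (2 * i + 1)) ≤
    A.card.choose ℓ * B.card.descFactorial ℓ *
      Nat.card {f : Equiv.Perm α // (∀ x, f (f x) = x) ∧ ∀ x, f x ≠ x} := by
  classical
  -- Step A : inject into the sigma type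
  have hstepA : Nat.card {f : Equiv.Perm α // ((∀ x, f (f x) = x) ∧ ∀ x, f x ≠ x) ∧
        2 * ℓ ≤ Nat.card {x : α // (x ∈ A ∧ f x ∈ B) ∨ (x ∈ B ∧ f x ∈ A)}} ≤
      Nat.card ((d : Dty ℓ A B) × ExtT ℓ A B d) := by
    have ex : ∀ (x : {f : Equiv.Perm α // ((∀ x, f (f x) = x) ∧ ∀ x, f x ≠ x) ∧
        2 * ℓ ≤ Nat.card {y : α // (y ∈ A ∧ f y ∈ B) ∨ (y ∈ B ∧ f y ∈ A)}}),
        ∃ s : Finset α, s ∈ A.powersetCard ℓ ∧ (∀ y ∈ s, x.1 y ∈ B) ∧ (∀ y ∈ s, x.1 y ∉ s) :=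
      fun x => extract_lemma A B ℓ x.1 x.2.1.1 x.2.1.2 x.2.2
    choose s hs hB hns using ex
    refine Nat.card_le_card_of_injective (fun x =>
      ⟨⟨⟨⟨s x, hs x⟩, ⟨fun i => ⟨x.1 (aFun ℓ A ⟨s x, hs x⟩ i),
          hB x _ (aFun_mem ℓ A ⟨s x, hs x⟩ i)⟩,
        by
          intro i j hij
          simp only [Subtype.mk.injEq] at hij
          exact aFun_inj ℓ A ⟨s x, hs x⟩ (x.1.injective hij)⟩⟩,
        by
          intro j
          exact hns x _ (aFun_mem ℓ A ⟨s x, hs x⟩ j)⟩,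
       ⟨x.1, x.2.1, fun i _ => rfl⟩⟩) ?_
    intro x y h
    have := congrArg (fun z : (d : Dty ℓ A B) × ExtT ℓ A B d => z.2.1) h
    exact Subtype.ext this
  letI : Fintype (Dty ℓ A B) := Fintype.ofFinite _
  letI : ∀ d : Dty ℓ A B, Fintype (ExtT ℓ A B d) := fun d => Fintype.ofFinite _
  have hsig : Nat.card ((d : Dty ℓ A B) × ExtT ℓ A B d)
      = ∑ d : Dty ℓ A B, Nat.card (ExtT ℓ A B d) := by
    rw [Nat.card_eq_fintype_card, Fintype.card_sigma]
    exact Finset.sum_congr rfl (fun d _ => (Nat.card_eq_fintype_card).symm)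
  have hperd : ∀ d : Dty ℓ A B,
      Nat.card (ExtT ℓ A B d) * ∏ i ∈ Finset.range ℓ, (Fintype.card α - (2 * i + 1)) ≤
      Nat.card {f : Equiv.Perm α // (∀ x, f (f x) = x) ∧ ∀ x, f x ≠ x} := by
    intro d
    exact chain_lemma (aFun ℓ A d.1.1) (fun i => (d.1.2 i : α))
      (aFun_inj ℓ A d.1.1)
      (fun i j hij => d.1.2.injective (Subtype.coe_injective hij))
      (by
        intro i j hij
        have hij' : aFun ℓ A d.1.1 i = (d.1.2 j : α) := hij
        exact d.2 j (hij' ▸ aFun_mem ℓ A d.1.1 i))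
      ℓ le_rfl
  have hD : Nat.card (Dty ℓ A B) ≤ A.card.choose ℓ * B.card.descFactorial ℓ := by
    have h1 : Nat.card (Dty ℓ A B) ≤
        Nat.card ({s : Finset α // s ∈ A.powersetCard ℓ} × (Fin ℓ ↪ {x : α // x ∈ B})) :=
      Nat.card_le_card_of_injective Subtype.val Subtype.coe_injective
    have h2 : Nat.card (Fin ℓ ↪ {x : α // x ∈ B}) = B.card.descFactorial ℓ := by
      rw [Nat.card_eq_fintype_card, Fintype.card_embedding_eq, Fintype.card_coe,
        Fintype.card_fin]
    rw [Nat.card_prod, Nat.card_eq_finsetCard, Finset.card_powersetCard, h2] at h1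
    exact h1
  calc Nat.card {f : Equiv.Perm α // ((∀ x, f (f x) = x) ∧ ∀ x, f x ≠ x) ∧
        2 * ℓ ≤ Nat.card {x : α // (x ∈ A ∧ f x ∈ B) ∨ (x ∈ B ∧ f x ∈ A)}} *
      ∏ i ∈ Finset.range ℓ, (Fintype.card α - (2 * i + 1))
      ≤ Nat.card ((d : Dty ℓ A B) × ExtT ℓ A B d) *
          ∏ i ∈ Finset.range ℓ, (Fintype.card α - (2 * i + 1)) :=
        Nat.mul_le_mul_right _ hstepA
    _ = ∑ d : Dty ℓ A B, Nat.card (ExtT ℓ A B d) *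
          ∏ i ∈ Finset.range ℓ, (Fintype.card α - (2 * i + 1)) := by
        rw [hsig, Finset.sum_mul]
    _ ≤ ∑ _d : Dty ℓ A B,
          Nat.card {f : Equiv.Perm α // (∀ x, f (f x) = x) ∧ ∀ x, f x ≠ x} :=
        Finset.sum_le_sum (fun d _ => hperd d)
    _ = Nat.card (Dty ℓ A B) *
          Nat.card {f : Equiv.Perm α // (∀ x, f (f x) = x) ∧ ∀ x, f x ≠ x} := by
        rw [Finset.sum_const, smul_eq_mul, Finset.card_univ]
        congr 1
        exact (Nat.card_eq_fintype_card).symm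
    _ ≤ A.card.choose ℓ * B.card.descFactorial ℓ *
          Nat.card {f : Equiv.Perm α // (∀ x, f (f x) = x) ∧ ∀ x, f x ≠ x} :=
        Nat.mul_le_mul_right _ hD

end Aux3

/-- Configuration model: bins `Fin (d i)` of points, uniformly random perfect matching
(fixed-point-free involution) over all `M = ∑ d i` points.  The number of edges `e(S₁,S₂)`
of the resulting multigraph with one end in `S₁` and the other in `S₂` is half the number
of points `p` with (`p` in a bin of `S₁` and its partner in a bin of `S₂`) or vice versa.
For `1 ≤ ℓ`, `2ℓ ≤ M`, the probability that `e(S₁,S₂) ≥ ℓ` is at most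
`C(d(S₁),ℓ) ⬝ (d(S₂))_ℓ / ∏_{i=1}^ℓ (M-2i+1)`.  Stated multiplicatively. -/
theorem stmt9 (n : ℕ) (d : Fin n → ℕ) (hM : Even (∑ i, d i))
    (S1 S2 : Finset (Fin n)) (ℓ : ℕ) (hℓ : 1 ≤ ℓ) (h2ℓ : 2 * ℓ ≤ ∑ i, d i) :
    Nat.card {f : Equiv.Perm ((i : Fin n) × Fin (d i)) //
        ((∀ x, f (f x) = x) ∧ ∀ x, f x ≠ x) ∧
        2 * ℓ ≤ Nat.card {p : (i : Fin n) × Fin (d i) //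
          (p.1 ∈ S1 ∧ (f p).1 ∈ S2) ∨ (p.1 ∈ S2 ∧ (f p).1 ∈ S1)}} *
      ∏ i ∈ Finset.range ℓ, ((∑ j, d j) - (2 * i + 1)) ≤
    (∑ i ∈ S1, d i).choose ℓ * (∑ i ∈ S2, d i).descFactorial ℓ *
      Nat.card {f : Equiv.Perm ((i : Fin n) × Fin (d i)) //
        (∀ x, f (f x) = x) ∧ ∀ x, f x ≠ x} := by
  classical
  letI : LinearOrder ((i : Fin n) × Fin (d i)) :=
    LinearOrder.lift' (Fintype.equivFin ((i : Fin n) × Fin (d i))) (Equiv.injective _)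
  have hcard : Fintype.card ((i : Fin n) × Fin (d i)) = ∑ i, d i := by
    simp [Fintype.card_sigma]
  set A : Finset ((i : Fin n) × Fin (d i)) := S1.sigma (fun i => Finset.univ) with hA
  set B : Finset ((i : Fin n) × Fin (d i)) := S2.sigma (fun i => Finset.univ) with hB
  have hAcard : A.card = ∑ i ∈ S1, d i := by simp [hA, Finset.card_sigma]
  have hBcard : B.card = ∑ i ∈ S2, d i := by simp [hB, Finset.card_sigma]
  have key := aux_lemma A B ℓ
  rw [hcard, hAcard, hBcard] at key
  have hiff : ∀ f : Equiv.Perm ((i : Fin n) × Fin (d i)),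
      Nat.card {p : (i : Fin n) × Fin (d i) //
          (p.1 ∈ S1 ∧ (f p).1 ∈ S2) ∨ (p.1 ∈ S2 ∧ (f p).1 ∈ S1)} =
      Nat.card {x : (i : Fin n) × Fin (d i) // (x ∈ A ∧ f x ∈ B) ∨ (x ∈ B ∧ f x ∈ A)} :=
    fun f => Nat.card_congr (Equiv.subtypeEquivRight (fun p => by
      simp [hA, hB, Finset.mem_sigma]))
  have hout : Nat.card {f : Equiv.Perm ((i : Fin n) × Fin (d i)) //
        ((∀ x, f (f x) = x) ∧ ∀ x, f x ≠ x) ∧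
        2 * ℓ ≤ Nat.card {p : (i : Fin n) × Fin (d i) //
          (p.1 ∈ S1 ∧ (f p).1 ∈ S2) ∨ (p.1 ∈ S2 ∧ (f p).1 ∈ S1)}} =
      Nat.card {f : Equiv.Perm ((i : Fin n) × Fin (d i)) //
        ((∀ x, f (f x) = x) ∧ ∀ x, f x ≠ x) ∧
        2 * ℓ ≤ Nat.card {x : (i : Fin n) × Fin (d i) //
          (x ∈ A ∧ f x ∈ B) ∨ (x ∈ B ∧ f x ∈ A)}} :=
    Nat.card_congr (Equiv.subtypeEquivRight (fun f => by rw [hiff f]))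
  rw [hout]
  exact key
end

section
/- Let H_\ell denote the set of simple graphs on {1,...,n} having exactly \ell edges, each with exactly one end in S_1 and one end in S_2 (S_1, S_2 \subseteq {1,...,n}). Then \sum_{H \in H_\ell} \prod_{i=1}^n (d_i)_{d_i^H} \le \binom{d(S_1)}{\ell} (d(S_2))_{\ell}, where d(S) = \sum_{i\in S} d_i and d_i^H is the degree of vertex i in H. -/
open scoped Classical

section Aux

variable {n : ℕ} (d : Fin n → ℕ) (S1 S2 : Finset (Fin n))

/-- Orientation predicate: `u` is the designated `S1`-end, `v` the `S2`-end. -/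
def omg (u v : Fin n) : Prop :=
  (u ∈ S1 ∧ v ∈ S2) ∧ (u ∈ S2 ∧ v ∈ S1 → u ≤ v)

lemma omg_or {u v : Fin n} (h : (u ∈ S1 ∧ v ∈ S2) ∨ (u ∈ S2 ∧ v ∈ S1)) :
    omg S1 S2 u v ∨ omg S1 S2 v u := by
  rcases h with ⟨h1, h2⟩ | ⟨h1, h2⟩
  · by_cases hb : u ∈ S2 ∧ v ∈ S1
    · rcases le_total u v with hle | hle
      · exact Or.inl ⟨⟨h1, h2⟩, fun _ => hle⟩
      · exact Or.inr ⟨⟨hb.2, hb.1⟩, fun _ => hle⟩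
    · exact Or.inl ⟨⟨h1, h2⟩, fun hc => absurd hc hb⟩
  · by_cases hb : v ∈ S2 ∧ u ∈ S1
    · rcases le_total u v with hle | hle
      · exact Or.inl ⟨⟨hb.2, hb.1⟩, fun _ => hle⟩
      · exact Or.inr ⟨⟨h2, h1⟩, fun _ => hle⟩
    · exact Or.inr ⟨⟨h2, h1⟩, fun hc => absurd hc hb⟩

lemma omg_not_both {u v : Fin n} (hne : u ≠ v) :
    ¬ (omg S1 S2 u v ∧ omg S1 S2 v u) := by
  rintro ⟨⟨⟨hu1, hv2⟩, i1⟩, ⟨⟨hv1, hu2⟩, i2⟩⟩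
  exact hne (le_antisymm (i1 ⟨hu2, hv1⟩) (i2 ⟨hv2, hu1⟩))

lemma omg_mem {u v : Fin n} (h : omg S1 S2 u v) : u ∈ S1 ∧ v ∈ S2 := h.1

/-- Points in the bins of vertices of `S`. -/
abbrev Pt (S : Finset (Fin n)) : Type := Σ i : {x : Fin n // x ∈ S}, Fin (d i.1)

lemma card_Pt (S : Finset (Fin n)) : Fintype.card (Pt d S) = ∑ i ∈ S, d i := by
  rw [Fintype.card_sigma]
  simp only [Fintype.card_fin]
  exact Finset.sum_coe_sort S d

variable (H : SimpleGraph (Fin n)) (sys : ∀ i : Fin n, H.neighborSet i ↪ Fin (d i))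

/-- The matching relation induced by a graph and a labeling system. -/
def MRel (p : Pt d S1) (q : Pt d S2) : Prop :=
  ∃ h : H.Adj p.1.1 q.1.1, omg S1 S2 p.1.1 q.1.1 ∧
    sys p.1.1 ⟨q.1.1, h⟩ = p.2 ∧ sys q.1.1 ⟨p.1.1, h.symm⟩ = q.2

lemma MRel.adj {p q} (h : MRel d S1 S2 H sys p q) : H.Adj p.1.1 q.1.1 := h.1

lemma rel_unique_q {p q q'} (h : MRel d S1 S2 H sys p q) (h' : MRel d S1 S2 H sys p q') :
    q = q' := by
  obtain ⟨⟨u, hu⟩, a⟩ := p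
  obtain ⟨⟨v, hv⟩, b⟩ := q
  obtain ⟨⟨v', hv'⟩, b'⟩ := q'
  obtain ⟨ha, -, h1, h2⟩ := h
  obtain ⟨ha', -, h1', h2'⟩ := h'
  dsimp only at h1 h2 h1' h2' ha ha'
  have hvv : v = v' := by
    have := (sys u).injective (h1.trans h1'.symm)
    exact congrArg Subtype.val this
  subst hvv
  have hb : b = b' := by rw [← h2, ← h2']
  subst hb
  rfl

lemma rel_unique_vtx {p p' : Pt d S1} {q q' : Pt d S2} (h : MRel d S1 S2 H sys p q)
    (h' : MRel d S1 S2 H sys p' q') (e1 : p.1.1 = p'.1.1) (e2 : q.1.1 = q'.1.1) :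
    p = p' ∧ q = q' := by
  obtain ⟨⟨u, hu⟩, a⟩ := p
  obtain ⟨⟨u', hu'⟩, a'⟩ := p'
  obtain ⟨⟨v, hv⟩, b⟩ := q
  obtain ⟨⟨v', hv'⟩, b'⟩ := q'
  dsimp only at e1 e2
  subst e1
  subst e2
  obtain ⟨ha, -, h1, h2⟩ := h
  obtain ⟨ha', -, h1', h2'⟩ := h'
  dsimp only at h1 h2 h1' h2' ha ha'
  have ea : a = a' := by rw [← h1, ← h1']
  have eb : b = b' := by rw [← h2, ← h2']
  subst ea
  subst eb
  exact ⟨rfl, rfl⟩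

lemma rel_unique_p {p p' q} (h : MRel d S1 S2 H sys p q) (h' : MRel d S1 S2 H sys p' q) :
    p = p' := by
  obtain ⟨⟨u, hu⟩, a⟩ := p
  obtain ⟨⟨u', hu'⟩, a'⟩ := p'
  obtain ⟨⟨v, hv⟩, b⟩ := q
  obtain ⟨ha, -, h1, h2⟩ := h
  obtain ⟨ha', -, h1', h2'⟩ := h'
  dsimp only at h1 h2 h1' h2' ha ha'
  have huu : u = u' := by
    have := (sys v).injective (h2.trans h2'.symm)
    exact congrArg Subtype.val this
  subst huu
  have hb : a = a' := by rw [← h1, ← h1']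
  subst hb
  rfl

/-- The `S1`-side support of the matching. -/
noncomputable def ms : Finset (Pt d S1) :=
  Finset.univ.filter (fun p => ∃ q, MRel d S1 S2 H sys p q)

lemma mem_ms {p : Pt d S1} : p ∈ ms d S1 S2 H sys ↔ ∃ q, MRel d S1 S2 H sys p q := by
  unfold ms
  simp

/-- The matching function. -/
noncomputable def mf (p : ↥(ms d S1 S2 H sys)) : Pt d S2 :=
  ((mem_ms d S1 S2 H sys).1 p.2).choose

lemma mf_spec (p : ↥(ms d S1 S2 H sys)) : MRel d S1 S2 H sys p.1 (mf d S1 S2 H sys p) :=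
  ((mem_ms d S1 S2 H sys).1 p.2).choose_spec

lemma mf_eq {p : ↥(ms d S1 S2 H sys)} {q : Pt d S2} (h : MRel d S1 S2 H sys p.1 q) :
    mf d S1 S2 H sys p = q :=
  rel_unique_q d S1 S2 H sys (mf_spec d S1 S2 H sys p) h

lemma mf_inj : Function.Injective (mf d S1 S2 H sys) := by
  intro p p' h
  have := rel_unique_p d S1 S2 H sys (mf_spec d S1 S2 H sys p)
    (h ▸ mf_spec d S1 S2 H sys p')
  exact Subtype.ext this

/-- For adjacent `u v` with orientation `omg u v`, the canonical related pair. -/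
lemma rel_of_adj {u v : Fin n} (ha : H.Adj u v) (ho : omg S1 S2 u v) :
    MRel d S1 S2 H sys ⟨⟨u, ho.1.1⟩, sys u ⟨v, ha⟩⟩ ⟨⟨v, ho.1.2⟩, sys v ⟨u, ha.symm⟩⟩ :=
  ⟨ha, ho, rfl, rfl⟩

/-- Each vertex condition implies the support has exactly `|E(H)|` elements. -/
lemma card_ms (hcond : ∀ u v, H.Adj u v → (u ∈ S1 ∧ v ∈ S2) ∨ (u ∈ S2 ∧ v ∈ S1)) :
    (ms d S1 S2 H sys).card = Nat.card H.edgeSet := by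
  classical
  have hbij : Function.Bijective (fun p : ↥(ms d S1 S2 H sys) =>
      (⟨s(p.1.1.1, (mf d S1 S2 H sys p).1.1),
        (H.mem_edgeSet).2 (mf_spec d S1 S2 H sys p).adj⟩ : ↥H.edgeSet)) := by
    constructor
    · intro p p' h
      have h2 : s(p.1.1.1, (mf d S1 S2 H sys p).1.1)
          = s(p'.1.1.1, (mf d S1 S2 H sys p').1.1) := congrArg Subtype.val h
      have hp := mf_spec d S1 S2 H sys p
      have hp' := mf_spec d S1 S2 H sys p'
      rw [Sym2.eq_iff] at h2
      rcases h2 with ⟨e1, e2⟩ | ⟨e1, e2⟩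
      · -- same orientation
        exact Subtype.ext (rel_unique_vtx d S1 S2 H sys hp hp' e1 e2).1
      · -- opposite orientations: contradiction
        exfalso
        obtain ⟨ha, ho, -, -⟩ := hp
        obtain ⟨ha', ho', -, -⟩ := hp'
        rw [e1, e2] at ho
        exact omg_not_both S1 S2 ha'.ne ⟨ho', ho⟩
    · rintro ⟨e, he⟩
      induction e with
      | h x y =>
        rw [SimpleGraph.mem_edgeSet] at he
        rcases omg_or S1 S2 (hcond x y he) with ho | ho
        · refine ⟨⟨⟨⟨x, ho.1.1⟩, sys x ⟨y, he⟩⟩, ?_⟩, ?_⟩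
          · exact (mem_ms d S1 S2 H sys).2 ⟨_, rel_of_adj d S1 S2 H sys he ho⟩
          · apply Subtype.ext
            have := mf_eq d S1 S2 H sys
              (p := ⟨⟨⟨x, ho.1.1⟩, sys x ⟨y, he⟩⟩, (mem_ms d S1 S2 H sys).2
                ⟨_, rel_of_adj d S1 S2 H sys he ho⟩⟩)
              (rel_of_adj d S1 S2 H sys he ho)
            dsimp only
            rw [this]
        · refine ⟨⟨⟨⟨y, ho.1.1⟩, sys y ⟨x, he.symm⟩⟩, ?_⟩, ?_⟩
          · exact (mem_ms d S1 S2 H sys).2 ⟨_, rel_of_adj d S1 S2 H sys he.symm ho⟩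
          · apply Subtype.ext
            have := mf_eq d S1 S2 H sys
              (p := ⟨⟨⟨y, ho.1.1⟩, sys y ⟨x, he.symm⟩⟩, (mem_ms d S1 S2 H sys).2
                ⟨_, rel_of_adj d S1 S2 H sys he.symm ho⟩⟩)
              (rel_of_adj d S1 S2 H sys he.symm ho)
            dsimp only
            rw [this]
            exact Sym2.eq_swap
  have := Fintype.card_of_bijective hbij
  rw [Fintype.card_coe] at this
  rw [this, Nat.card_eq_fintype_card]


/-- Evaluation map recovering the partial matching from a (set, embedding) pair. -/
noncomputable def gM (m : Σ s : Finset (Pt d S1), ({x // x ∈ s} ↪ Pt d S2)) :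
    Pt d S1 → Option (Pt d S2) :=
  fun p => if hp : p ∈ m.1 then some (m.2 ⟨p, hp⟩) else none

lemma gM_mk (p : Pt d S1) (q : Pt d S2) :
    gM d S1 S2 ⟨ms d S1 S2 H sys, ⟨mf d S1 S2 H sys, mf_inj d S1 S2 H sys⟩⟩ p = some q ↔
      MRel d S1 S2 H sys p q := by
  unfold gM
  dsimp only
  split
  next hp =>
    simp only [Function.Embedding.coeFn_mk, Option.some.injEq]
    exact ⟨fun e => e ▸ mf_spec d S1 S2 H sys ⟨p, hp⟩, fun hr => mf_eq d S1 S2 H sys hr⟩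
  next hp =>
    exact iff_of_false (by simp) (fun hr => hp ((mem_ms d S1 S2 H sys).2 ⟨q, hr⟩))

lemma sys_ext (sys' : ∀ i : Fin n, H.neighborSet i ↪ Fin (d i))
    (hcond : ∀ u v, H.Adj u v → (u ∈ S1 ∧ v ∈ S2) ∨ (u ∈ S2 ∧ v ∈ S1))
    (key : ∀ p q, MRel d S1 S2 H sys p q ↔ MRel d S1 S2 H sys' p q) : sys = sys' := by
  funext i
  refine DFunLike.ext _ _ ?_
  rintro ⟨j, hj⟩
  have ha : H.Adj i j := hj
  rcases omg_or S1 S2 (hcond i j ha) with ho | ho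
  · obtain ⟨ha2, -, h1, -⟩ := (key _ _).1 (rel_of_adj d S1 S2 H sys ha ho)
    exact h1.symm
  · obtain ⟨ha2, -, -, h2⟩ := (key _ _).1 (rel_of_adj d S1 S2 H sys ha.symm ho)
    exact h2.symm

lemma card_sys (H : SimpleGraph (Fin n)) :
    Fintype.card (∀ i : Fin n, H.neighborSet i ↪ Fin (d i)) =
      ∏ i, (d i).descFactorial (Nat.card (H.neighborSet i)) := by
  rw [Fintype.card_pi]
  refine Finset.prod_congr rfl fun i _ => ?_
  rw [Fintype.card_embedding_eq, Fintype.card_fin, Nat.card_eq_fintype_card]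

end Aux

/-- Let `𝓗_ℓ` be the set of simple graphs on `Fin n` with exactly `ℓ` edges, each edge
having exactly one end in `S₁` and the other in `S₂`.  Then
`∑_{H ∈ 𝓗_ℓ} ∏ i (d i)_{deg_H i} ≤ C(d(S₁), ℓ) ⬝ (d(S₂))_ℓ`. -/
theorem stmt11 (n : ℕ) (d : Fin n → ℕ) (S1 S2 : Finset (Fin n)) (ℓ : ℕ) :
    ∑ H ∈ Finset.univ.filter (fun H : SimpleGraph (Fin n) =>
        Nat.card H.edgeSet = ℓ ∧
        ∀ u v, H.Adj u v → (u ∈ S1 ∧ v ∈ S2) ∨ (u ∈ S2 ∧ v ∈ S1)),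
      ∏ i, (d i).descFactorial (Nat.card (H.neighborSet i)) ≤
    (∑ i ∈ S1, d i).choose ℓ * (∑ i ∈ S2, d i).descFactorial ℓ := by
  classical
  set F : Finset (SimpleGraph (Fin n)) := Finset.univ.filter (fun H : SimpleGraph (Fin n) =>
      Nat.card H.edgeSet = ℓ ∧
      ∀ u v, H.Adj u v → (u ∈ S1 ∧ v ∈ S2) ∨ (u ∈ S2 ∧ v ∈ S1)) with hF
  have hD : Fintype.card
      (Σ H : {H : SimpleGraph (Fin n) // H ∈ F}, (∀ i : Fin n, H.1.neighborSet i ↪ Fin (d i)))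
      = ∑ H ∈ F, ∏ i, (d i).descFactorial (Nat.card (H.neighborSet i)) := by
    rw [Fintype.card_sigma,
      ← Finset.sum_coe_sort F (fun H => ∏ i, (d i).descFactorial (Nat.card (H.neighborSet i)))]
    exact Fintype.sum_congr _ _ fun H => card_sys d H.1
  have hM : Fintype.card
      (Σ s : {s : Finset (Pt d S1) // s.card = ℓ}, ({x // x ∈ s.1} ↪ Pt d S2))
      = (∑ i ∈ S1, d i).choose ℓ * (∑ i ∈ S2, d i).descFactorial ℓ := by
    rw [Fintype.card_sigma]
    have h1 : ∀ s : {s : Finset (Pt d S1) // s.card = ℓ},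
        Fintype.card ({x // x ∈ s.1} ↪ Pt d S2) = (∑ i ∈ S2, d i).descFactorial ℓ := by
      intro s
      rw [Fintype.card_embedding_eq, Fintype.card_coe, s.2, card_Pt]
    rw [Finset.sum_congr rfl (fun s _ => h1 s), Finset.sum_const, Finset.card_univ,
      Fintype.card_finset_len, card_Pt, smul_eq_mul]
  -- the injection
  have hcard : ∀ (x : Σ H : {H : SimpleGraph (Fin n) // H ∈ F},
      (∀ i : Fin n, H.1.neighborSet i ↪ Fin (d i))), (ms d S1 S2 x.1.1 x.2).card = ℓ := by
    intro x
    have hx := Finset.mem_filter.1 x.1.2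
    rw [card_ms d S1 S2 x.1.1 x.2 hx.2.2, hx.2.1]
  let Φ : (Σ H : {H : SimpleGraph (Fin n) // H ∈ F},
      (∀ i : Fin n, H.1.neighborSet i ↪ Fin (d i))) →
      (Σ s : {s : Finset (Pt d S1) // s.card = ℓ}, ({x // x ∈ s.1} ↪ Pt d S2)) :=
    fun x => ⟨⟨ms d S1 S2 x.1.1 x.2, hcard x⟩,
      ⟨mf d S1 S2 x.1.1 x.2, mf_inj d S1 S2 x.1.1 x.2⟩⟩
  have hΦ : Function.Injective Φ := by
    rintro ⟨⟨H, hH⟩, sys⟩ ⟨⟨H', hH'⟩, sys'⟩ h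
    have hgm : gM d S1 S2 ⟨ms d S1 S2 H sys, ⟨mf d S1 S2 H sys, mf_inj d S1 S2 H sys⟩⟩
        = gM d S1 S2 ⟨ms d S1 S2 H' sys', ⟨mf d S1 S2 H' sys', mf_inj d S1 S2 H' sys'⟩⟩ :=
      congrArg (fun m : (Σ s : {s : Finset (Pt d S1) // s.card = ℓ},
        ({x // x ∈ s.1} ↪ Pt d S2)) => gM d S1 S2 ⟨m.1.1, m.2⟩) h
    have key : ∀ p q, MRel d S1 S2 H sys p q ↔ MRel d S1 S2 H' sys' p q := by
      intro p q
      rw [← gM_mk d S1 S2 H sys p q, ← gM_mk d S1 S2 H' sys' p q, hgm]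
    have hcond : ∀ u v, H.Adj u v → (u ∈ S1 ∧ v ∈ S2) ∨ (u ∈ S2 ∧ v ∈ S1) :=
      (Finset.mem_filter.1 hH).2.2
    have hcond' : ∀ u v, H'.Adj u v → (u ∈ S1 ∧ v ∈ S2) ∨ (u ∈ S2 ∧ v ∈ S1) :=
      (Finset.mem_filter.1 hH').2.2
    have hHeq : H = H' := by
      ext u v
      constructor <;> intro hadj
      · rcases omg_or S1 S2 (hcond u v hadj) with ho | ho
        · exact ((key _ _).1 (rel_of_adj d S1 S2 H sys hadj ho)).elim fun ha _ => ha
        · exact ((key _ _).1 (rel_of_adj d S1 S2 H sys hadj.symm ho)).elim fun ha _ => ha.symm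
      · rcases omg_or S1 S2 (hcond' u v hadj) with ho | ho
        · exact ((key _ _).2 (rel_of_adj d S1 S2 H' sys' hadj ho)).elim fun ha _ => ha
        · exact ((key _ _).2 (rel_of_adj d S1 S2 H' sys' hadj.symm ho)).elim fun ha _ => ha.symm
    subst hHeq
    have hsys : sys = sys' := sys_ext d S1 S2 H sys sys' hcond key
    subst hsys
    rfl
  calc ∑ H ∈ F, ∏ i, (d i).descFactorial (Nat.card (H.neighborSet i))
      = Fintype.card (Σ H : {H : SimpleGraph (Fin n) // H ∈ F},
          (∀ i : Fin n, H.1.neighborSet i ↪ Fin (d i))) := hD.symm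
    _ ≤ Fintype.card (Σ s : {s : Finset (Pt d S1) // s.card = ℓ},
          ({x // x ∈ s.1} ↪ Pt d S2)) := Fintype.card_le_of_injective Φ hΦ
    _ = (∑ i ∈ S1, d i).choose ℓ * (∑ i ∈ S2, d i).descFactorial ℓ := hM
end

section
/- Let G' be a simple graph with degree sequence d, let H_1 be a subgraph of G' with degree sequence d^{H_1}, and let u, v be distinct vertices with uv not an edge of G'. The number of ordered 4-tuples (x,a,y,b) such that xu, yv, ab are edges of G' not in H_1 (with u,v,x,y,a,b distinct except possibly x=y) is at most (d_u - d_u^{H_1})(d_v - d_v^{H_1})(M - 2e(H_1)), where M = \sum_i d_i. -/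
open Finset

private def dartEquiv {V : Type*} (G : SimpleGraph V) :
    G.Dart ≃ {p : V × V // G.Adj p.1 p.2} :=
  ⟨fun d => ⟨d.toProd, d.adj⟩, fun p => ⟨p.1, p.2⟩, fun _ => rfl, fun _ => rfl⟩

private lemma card_and_not {α : Type*} [Fintype α] [DecidableEq α] (p q : α → Prop)
    [DecidablePred p] [DecidablePred q] (h : ∀ x, q x → p x) :
    Fintype.card {x // p x ∧ ¬ q x} = Fintype.card {x // p x} - Fintype.card {x // q x} := by
  simp only [Fintype.card_subtype]
  rw [show (univ.filter fun x => p x ∧ ¬ q x) = (univ.filter p) \ (univ.filter q) by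
    ext x; simp only [mem_filter, mem_sdiff, mem_univ, true_and]]
  exact Finset.card_sdiff_of_subset (by intro x; simp; exact h x)

private lemma nbr_card {n : ℕ} (G H : SimpleGraph (Fin n)) (hle : H ≤ G) (w : Fin n) :
    Nat.card {x : Fin n // G.Adj x w ∧ ¬H.Adj x w} =
      Nat.card (G.neighborSet w) - Nat.card (H.neighborSet w) := by
  classical
  have h1 : ∀ (K : SimpleGraph (Fin n)), Nat.card (K.neighborSet w) =
      Nat.card {x : Fin n // K.Adj x w} := by
    intro K
    exact Nat.card_congr (Equiv.subtypeEquivRight (fun x => K.adj_comm w x))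
  rw [h1, h1, Nat.card_eq_fintype_card, Nat.card_eq_fintype_card, Nat.card_eq_fintype_card]
  exact card_and_not _ _ (fun x hx => hle hx)

private lemma pair_card {n : ℕ} (G H : SimpleGraph (Fin n)) (hle : H ≤ G) :
    Nat.card {p : Fin n × Fin n // G.Adj p.1 p.2 ∧ ¬H.Adj p.1 p.2} =
      (∑ i, Nat.card (G.neighborSet i)) - 2 * Nat.card H.edgeSet := by
  classical
  have h1 : ∀ (K : SimpleGraph (Fin n)),
      Nat.card {p : Fin n × Fin n // K.Adj p.1 p.2} = Fintype.card K.Dart :=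
    fun K => ((Nat.card_congr (dartEquiv K)).symm).trans Nat.card_eq_fintype_card
  rw [Nat.card_eq_fintype_card,
    card_and_not (fun p : Fin n × Fin n => G.Adj p.1 p.2)
      (fun p : Fin n × Fin n => H.Adj p.1 p.2) (fun p hp => hle hp),
    ← Nat.card_eq_fintype_card, ← Nat.card_eq_fintype_card, h1, h1,
    SimpleGraph.dart_card_eq_sum_degrees, SimpleGraph.dart_card_eq_twice_card_edges,
    SimpleGraph.edgeFinset_card, ← Nat.card_eq_fintype_card]
  congr 1
  exact Finset.sum_congr rfl fun i _ => by
    rw [Nat.card_eq_fintype_card, SimpleGraph.card_neighborSet_eq_degree]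

/-- Claim 3.2(a) (with `H₂ = ∅`): for a simple graph `G'` with degree sequence `d`,
a subgraph `H₁ ≤ G'`, and distinct `u, v` with `uv ∉ G'`, the number of backward
switchings, i.e. ordered tuples `(x,a,y,b)` with all of `u,v,x,y,a,b` distinct except
possibly `x = y` and with `xu, yv, ab` edges of `G'` not in `H₁`, is at most
`(d_u - d_u^{H₁}) (d_v - d_v^{H₁}) (M - 2 e(H₁))` where `M = ∑ d i`. -/
theorem stmt15 (n : ℕ) (G' H1 : SimpleGraph (Fin n)) (hH1 : H1 ≤ G')
    (d : Fin n → ℕ) (hdeg : ∀ i, Nat.card (G'.neighborSet i) = d i)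
    (u v : Fin n) (hne : u ≠ v) (huv : ¬G'.Adj u v) :
    Nat.card {t : Fin n × Fin n × Fin n × Fin n //
        (t.1 ≠ u ∧ t.1 ≠ v ∧ t.2.2.1 ≠ u ∧ t.2.2.1 ≠ v ∧
         t.2.1 ≠ u ∧ t.2.1 ≠ v ∧ t.2.2.2 ≠ u ∧ t.2.2.2 ≠ v ∧
         t.1 ≠ t.2.1 ∧ t.1 ≠ t.2.2.2 ∧ t.2.2.1 ≠ t.2.1 ∧ t.2.2.1 ≠ t.2.2.2 ∧
         t.2.1 ≠ t.2.2.2) ∧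
        (G'.Adj t.1 u ∧ ¬H1.Adj t.1 u ∧ G'.Adj t.2.2.1 v ∧ ¬H1.Adj t.2.2.1 v ∧
         G'.Adj t.2.1 t.2.2.2 ∧ ¬H1.Adj t.2.1 t.2.2.2)} ≤
      (d u - Nat.card (H1.neighborSet u)) * (d v - Nat.card (H1.neighborSet v)) *
        ((∑ i, d i) - 2 * Nat.card H1.edgeSet) := by
  classical
  have key : Nat.card {t : Fin n × Fin n × Fin n × Fin n //
        (t.1 ≠ u ∧ t.1 ≠ v ∧ t.2.2.1 ≠ u ∧ t.2.2.1 ≠ v ∧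
         t.2.1 ≠ u ∧ t.2.1 ≠ v ∧ t.2.2.2 ≠ u ∧ t.2.2.2 ≠ v ∧
         t.1 ≠ t.2.1 ∧ t.1 ≠ t.2.2.2 ∧ t.2.2.1 ≠ t.2.1 ∧ t.2.2.1 ≠ t.2.2.2 ∧
         t.2.1 ≠ t.2.2.2) ∧
        (G'.Adj t.1 u ∧ ¬H1.Adj t.1 u ∧ G'.Adj t.2.2.1 v ∧ ¬H1.Adj t.2.2.1 v ∧
         G'.Adj t.2.1 t.2.2.2 ∧ ¬H1.Adj t.2.1 t.2.2.2)} ≤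
      Nat.card {x : Fin n // G'.Adj x u ∧ ¬H1.Adj x u} *
      Nat.card {y : Fin n // G'.Adj y v ∧ ¬H1.Adj y v} *
      Nat.card {p : Fin n × Fin n // G'.Adj p.1 p.2 ∧ ¬H1.Adj p.1 p.2} := by
    rw [← Nat.card_prod, ← Nat.card_prod]
    refine Nat.card_le_card_of_injective (fun t =>
      ((⟨t.1.1, t.2.2.1, t.2.2.2.1⟩, ⟨t.1.2.2.1, t.2.2.2.2.1, t.2.2.2.2.2.1⟩),
        ⟨(t.1.2.1, t.1.2.2.2), t.2.2.2.2.2.2.1, t.2.2.2.2.2.2.2⟩)) ?_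
    intro s t h
    simp only [Prod.mk.injEq, Subtype.mk.injEq] at h
    apply Subtype.ext
    obtain ⟨⟨h1, h2⟩, h3a, h3b⟩ := h
    exact Prod.ext h1 (Prod.ext h3a (Prod.ext h2 h3b))
  calc _ ≤ _ := key
  _ = _ := by
    rw [nbr_card G' H1 hH1 u, nbr_card G' H1 hH1 v, pair_card G' H1 hH1, hdeg u, hdeg v]
    congr 2
    exact Finset.sum_congr rfl fun i _ => hdeg i
end

section
/- For even integers m and M with 2 \le m \le M, the bound (m!/(2^{m/2}(m/2)!)) \cdot ((M-m)/2)!/(M/2)! \cdot 2^{-m/2} \le \sqrt{2} \, (m/(M-m))^{m/2} (1-m/M)^{M/2} holds for all sufficiently large M with M - m = \Omega(M). -/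
open Real

/-- `n! e^n / n^n` is monotone. -/
lemma aux_u_mono (B A : ℕ) (h : B ≤ A) :
    (B.factorial : ℝ) * Real.exp 1 ^ B * (A : ℝ) ^ A ≤
      (A.factorial : ℝ) * Real.exp 1 ^ A * (B : ℝ) ^ B := by
  induction A, h using Nat.le_induction with
  | base => exact le_refl _
  | succ n hn ih =>
    have hstep : ((n : ℝ) + 1) ^ n ≤ Real.exp 1 * (n : ℝ) ^ n := by
      rcases Nat.eq_zero_or_pos n with h0 | h0
      · subst h0
        simpa using (Real.add_one_le_exp (1 : ℝ)).trans' (by norm_num)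
      · have hn0 : (0:ℝ) < n := by exact_mod_cast h0
        have h1 : (n : ℝ) + 1 ≤ (n : ℝ) * Real.exp (1 / n) := by
          have := Real.add_one_le_exp (1 / (n:ℝ))
          calc (n:ℝ) + 1 = (n:ℝ) * (1/(n:ℝ) + 1) := by field_simp; ring
            _ ≤ (n:ℝ) * Real.exp (1/(n:ℝ)) := by nlinarith
        calc ((n:ℝ)+1)^n ≤ ((n:ℝ) * Real.exp (1/n))^n := by
              apply pow_le_pow_left₀ (by positivity) h1
          _ = (n:ℝ)^n * Real.exp (1/n) ^ n := by rw [mul_pow]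
          _ = (n:ℝ)^n * Real.exp 1 := by
              rw [← Real.exp_nat_mul]
              congr 1
              field_simp
          _ = Real.exp 1 * (n:ℝ)^n := by ring
    have hpos : (0:ℝ) ≤ (B.factorial : ℝ) * Real.exp 1 ^ B := by positivity
    calc (B.factorial : ℝ) * Real.exp 1 ^ B * ((n:ℕ) + 1 : ℕ) ^ ((n:ℕ)+1)
        = (B.factorial : ℝ) * Real.exp 1 ^ B * (((n:ℝ)+1) ^ n * ((n:ℝ)+1)) := by
          push_cast; ring
      _ ≤ (B.factorial : ℝ) * Real.exp 1 ^ B * (Real.exp 1 * (n:ℝ)^n * ((n:ℝ)+1)) := by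
          apply mul_le_mul_of_nonneg_left _ hpos
          have : (0:ℝ) ≤ (n:ℝ)+1 := by positivity
          nlinarith [hstep]
      _ = ((B.factorial : ℝ) * Real.exp 1 ^ B * (n:ℝ)^n) * (Real.exp 1 * ((n:ℝ)+1)) := by ring
      _ ≤ ((n.factorial : ℝ) * Real.exp 1 ^ n * (B:ℝ)^B) * (Real.exp 1 * ((n:ℝ)+1)) := by
          apply mul_le_mul_of_nonneg_right ih (by positivity)
      _ = ((n+1).factorial : ℝ) * Real.exp 1 ^ (n+1) * (B:ℝ)^B := by
          rw [Nat.factorial_succ]; push_cast; ring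

/-- Sharp Stirling-type bound from antitonicity of `stirlingSeq`. -/
lemma aux_central (a : ℕ) (ha : 1 ≤ a) :
    ((2*a).factorial : ℝ) * Real.exp 1 ^ a ≤
      Real.sqrt 2 * 4 ^ a * (a.factorial : ℝ) * (a : ℝ) ^ a := by
  obtain ⟨n, rfl⟩ := Nat.exists_eq_add_of_le ha
  set a := 1 + n with hadef
  have h := Stirling.stirlingSeq'_antitone (show n ≤ 2 * a - 1 by omega)
  have h2a : (2*a - 1) + 1 = 2 * a := by omega
  have hna : n + 1 = a := by omega
  simp only [Function.comp_apply, Nat.succ_eq_add_one, h2a, hna] at h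
  rw [Stirling.stirlingSeq, Stirling.stirlingSeq] at h
  push_cast at h
  have ha0 : (0:ℝ) < (a:ℝ) := by positivity
  have hs : (0:ℝ) < Real.sqrt (2 * (a:ℝ)) := Real.sqrt_pos.mpr (by positivity)
  have he : (0:ℝ) < Real.exp 1 := Real.exp_pos 1
  have hd1 : (0:ℝ) < Real.sqrt (2 * (2 * (a:ℝ))) * (2 * (a:ℝ) / Real.exp 1) ^ (2*a) := by
    positivity
  have hd2 : (0:ℝ) < Real.sqrt (2 * (a:ℝ)) * ((a:ℝ) / Real.exp 1) ^ a := by positivity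
  rw [div_le_div_iff₀ hd1 hd2] at h
  have hsplit : Real.sqrt (2 * (2 * (a:ℝ))) = Real.sqrt 2 * Real.sqrt (2 * (a:ℝ)) :=
    Real.sqrt_mul (by norm_num : (0:ℝ) ≤ 2) _
  rw [hsplit] at h
  obtain ⟨E, hE⟩ : ∃ E : ℝ, Real.exp 1 = E := ⟨_, rfl⟩
  rw [hE] at h he ⊢
  set s := Real.sqrt (2 * (a:ℝ)) with hsdef
  set x := (a:ℝ) with hxdef
  have key : ((2*a).factorial : ℝ) * E ^ a * (s * x^a / E^(2*a)) ≤
      (Real.sqrt 2 * 4 ^ a * (a.factorial:ℝ) * x^a) * (s * x^a / E^(2*a)) := by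
    calc ((2*a).factorial : ℝ) * E ^ a * (s * x^a / E^(2*a))
        = ((2*a).factorial : ℝ) * (s * (x / E) ^ a) := by
          rw [div_pow, two_mul, pow_add]
          field_simp
          ring
      _ ≤ (a.factorial : ℝ) * (Real.sqrt 2 * s * (2 * x / E) ^ (2*a)) := h
      _ = (Real.sqrt 2 * 4 ^ a * (a.factorial:ℝ) * x^a) * (s * x^a / E^(2*a)) := by
          rw [div_pow, mul_pow,
            show (2:ℝ) ^ (2*a) = 4 ^ a by rw [pow_mul]; norm_num,
            show x ^ (2*a) = x^a * x^a by rw [two_mul, pow_add],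
            show E ^ (2*a) = E^a * E^a by rw [two_mul, pow_add]]
          field_simp
  have hcpos : (0:ℝ) < s * x^a / E^(2*a) := by positivity
  exact le_of_mul_le_mul_right key hcpos

/-- Stirling-type estimate (heart of Lemma 4.2): for sequences of even integers
`2 ≤ m k ≤ M k` with `M k - m k ≥ c M k` for a fixed `c > 0` and `M k → ∞`,
eventually
`(m!/(2^{m/2}(m/2)!)) ⬝ ((M-m)/2)!/(M/2)! ⬝ 2^{-m/2}
  ≤ √2 (m/(M-m))^{m/2} (1 - m/M)^{M/2}`. -/
theorem stmt18 (m M : ℕ → ℕ) (c : ℝ) (hc : 0 < c)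
    (hMe : ∀ k, Even (M k)) (hme : ∀ k, Even (m k))
    (h2 : ∀ k, 2 ≤ m k) (hmM : ∀ k, m k ≤ M k)
    (hgap : ∀ k, c * M k ≤ (M k : ℝ) - m k)
    (hMlim : Filter.Tendsto M Filter.atTop Filter.atTop) :
    ∃ K, ∀ k ≥ K,
      ((Nat.factorial (m k) : ℝ) / (2 ^ (m k / 2) * Nat.factorial (m k / 2))) *
          ((Nat.factorial ((M k - m k) / 2) : ℝ) / Nat.factorial (M k / 2)) *
          ((2 : ℝ)⁻¹) ^ (m k / 2) ≤
        Real.sqrt 2 * ((m k : ℝ) / ((M k : ℝ) - m k)) ^ (m k / 2) *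
          (1 - (m k : ℝ) / M k) ^ (M k / 2) := by
  refine ⟨0, fun k _ => ?_⟩
  obtain ⟨a, hma⟩ := hme k
  obtain ⟨A, hMA⟩ := hMe k
  -- m k = 2*a, M k = 2*A
  have hmk : m k = 2 * a := by omega
  have hMk : M k = 2 * A := by omega
  have hmlt : m k < M k := by
    by_contra hcon
    have heq : m k = M k := le_antisymm (hmM k) (by omega)
    have h0 : (0:ℝ) < c * M k := by
      have : (0:ℝ) < (M k : ℝ) := by
        have : 2 ≤ M k := le_trans (h2 k) (hmM k)
        exact_mod_cast lt_of_lt_of_le two_pos this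
      positivity
    have := hgap k
    rw [heq] at this
    linarith
  set B := A - a with hBdef
  have haA : a < A := by omega
  have h2k := h2 k
  have ha1 : 1 ≤ a := by omega
  have hABa : A = a + B := by omega
  have e1 : m k / 2 = a := by omega
  have e2 : M k / 2 = A := by omega
  have e3 : (M k - m k) / 2 = B := by omega
  rw [e1, e2, e3, hmk, hMk]
  have ha0 : (0:ℝ) < (a:ℝ) := by exact_mod_cast ha1
  have hB1 : 1 ≤ B := by omega
  have hB0 : (0:ℝ) < (B:ℝ) := by exact_mod_cast hB1
  have hA0 : (0:ℝ) < (A:ℝ) := by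
    have : 1 ≤ A := by omega
    exact_mod_cast this
  -- simplify the RHS base expressions
  have r1 : ((2*a : ℕ) : ℝ) / (((2*A : ℕ) : ℝ) - ((2*a : ℕ) : ℝ)) = (a:ℝ) / (B:ℝ) := by
    have hcB : ((B:ℕ):ℝ) = (A:ℝ) - (a:ℝ) := by
      rw [hBdef]
      push_cast [Nat.cast_sub haA.le]
      ring
    push_cast
    rw [show 2*(A:ℝ) - 2*(a:ℝ) = 2 * ((A:ℝ) - (a:ℝ)) by ring, ← hcB]
    rw [mul_div_mul_left _ _ (by norm_num : (2:ℝ) ≠ 0)]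
  have r2 : 1 - ((2*a : ℕ) : ℝ) / ((2*A : ℕ) : ℝ) = (B:ℝ) / (A:ℝ) := by
    have hcB : ((B:ℕ):ℝ) = (A:ℝ) - (a:ℝ) := by
      rw [hBdef]
      push_cast [Nat.cast_sub haA.le]
      ring
    push_cast
    rw [hcB]
    field_simp
  rw [r1, r2]
  -- core inequality
  have hfa : (0:ℝ) < (a.factorial : ℝ) := by exact_mod_cast a.factorial_pos
  have hfA : (0:ℝ) < (A.factorial : ℝ) := by exact_mod_cast A.factorial_pos
  have hfB : (0:ℝ) < (B.factorial : ℝ) := by exact_mod_cast B.factorial_pos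
  have hf2a : (0:ℝ) < ((2*a).factorial : ℝ) := by exact_mod_cast (2*a).factorial_pos
  have hexp : (0:ℝ) < Real.exp 1 ^ B := by positivity
  have L1 : (B.factorial : ℝ) * (A:ℝ)^A ≤ (A.factorial : ℝ) * Real.exp 1 ^ a * (B:ℝ)^B := by
    have h := aux_u_mono B A (by omega)
    have hEA : Real.exp 1 ^ A = Real.exp 1 ^ a * Real.exp 1 ^ B := by
      rw [hABa, pow_add]
    rw [hEA] at h
    have := le_of_mul_le_mul_right
      (show (B.factorial : ℝ) * (A:ℝ)^A * Real.exp 1 ^ B ≤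
          ((A.factorial : ℝ) * Real.exp 1 ^ a * (B:ℝ)^B) * Real.exp 1 ^ B by
        nlinarith [h]) hexp
    exact this
  have L2 := aux_central a ha1
  have core : ((2*a).factorial : ℝ) * (B.factorial : ℝ) * (A:ℝ)^A ≤
      Real.sqrt 2 * 4 ^ a * (a.factorial : ℝ) * (A.factorial : ℝ) * (a:ℝ)^a * (B:ℝ)^B := by
    calc ((2*a).factorial : ℝ) * (B.factorial : ℝ) * (A:ℝ)^A
        = ((2*a).factorial : ℝ) * ((B.factorial : ℝ) * (A:ℝ)^A) := by ring
      _ ≤ ((2*a).factorial : ℝ) * ((A.factorial : ℝ) * Real.exp 1 ^ a * (B:ℝ)^B) :=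
          mul_le_mul_of_nonneg_left L1 hf2a.le
      _ = (((2*a).factorial : ℝ) * Real.exp 1 ^ a) * ((A.factorial : ℝ) * (B:ℝ)^B) := by ring
      _ ≤ (Real.sqrt 2 * 4 ^ a * (a.factorial : ℝ) * (a:ℝ)^a) *
            ((A.factorial : ℝ) * (B:ℝ)^B) :=
          mul_le_mul_of_nonneg_right L2 (by positivity)
      _ = Real.sqrt 2 * 4 ^ a * (a.factorial : ℝ) * (A.factorial : ℝ) * (a:ℝ)^a * (B:ℝ)^B := by
          ring
  -- rewrite both sides as single fractions
  have lhs_eq : (((2*a).factorial : ℝ) / (2 ^ a * (a.factorial : ℝ))) *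
        ((B.factorial : ℝ) / (A.factorial : ℝ)) * ((2:ℝ)⁻¹) ^ a =
      (((2*a).factorial : ℝ) * (B.factorial : ℝ)) / (4 ^ a * (a.factorial : ℝ) * (A.factorial : ℝ)) := by
    rw [inv_pow]
    have h4 : (4:ℝ) ^ a = 2 ^ a * 2 ^ a := by
      rw [← mul_pow]; norm_num
    rw [h4]
    field_simp
  have rhs_eq : Real.sqrt 2 * ((a:ℝ) / (B:ℝ)) ^ a * ((B:ℝ) / (A:ℝ)) ^ A =
      (Real.sqrt 2 * (a:ℝ)^a * (B:ℝ)^B) / ((A:ℝ)^A) := by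
    rw [div_pow, div_pow, hABa, pow_add]
    have hBa : (B:ℝ)^a ≠ 0 := by positivity
    field_simp
  rw [lhs_eq, rhs_eq]
  rw [div_le_div_iff₀ (by positivity) (by positivity)]
  calc ((2*a).factorial : ℝ) * (B.factorial : ℝ) * (A:ℝ)^A ≤
      Real.sqrt 2 * 4 ^ a * (a.factorial : ℝ) * (A.factorial : ℝ) * (a:ℝ)^a * (B:ℝ)^B := core
    _ = Real.sqrt 2 * (a:ℝ)^a * (B:ℝ)^B * (4 ^ a * (a.factorial : ℝ) * (A.factorial : ℝ)) := by
        ring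
end
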